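/- Given integers b_1, ..., b_r and q with gcd(b_1, ..., b_r, q) = 1, there exist integers λ_1, ..., λ_r such that gcd(Σ_{j=1}^r λ_j b_j, q) = 1. -/

import Mathlib

theorem exists_weights_coprime_general (r : ℕ) (q : ℤ)
    (b : Fin r → ℤ) (hgcd : Int.gcd (Finset.univ.gcd b) q = 1) :
    ∃ lam : Fin r → ℤ, Int.gcd (∑ j, lam j * b j) q = 1 := by
  obtain ⟨lam, hlam⟩ := Finset.univ.gcd_eq_sum_mul b
  refine ⟨lam, ?_⟩
  simpa only [hlam, mul_comm] using hgcd

/-- Given integers `b₁, …, b_r` and `q ≥ 1` with `gcd(b₁, …, b_r, q) = 1`, there exist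
integer weights `λ₁, …, λ_r` such that `gcd(Σⱼ λⱼ bⱼ, q) = 1`. -/
theorem exists_weights_coprime (r : ℕ) (hr : 1 ≤ r) (q : ℤ) (hq : 1 ≤ q)
    (b : Fin r → ℤ) (hgcd : Int.gcd (Finset.univ.gcd b) q = 1) :
    ∃ lam : Fin r → ℤ, Int.gcd (∑ j, lam j * b j) q = 1 :=
  exists_weights_coprime_general r q b hgcd
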